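/- arXiv:1302.3811 — 4 statements merged into one kernel-verified Lean document; each statement's English description precedes it below -/
import Mathlib

section
/- For every loopless matroid M on a finite ground set E, the indicated chromatic number of M equals the chromatic number of M, i.e., χ_i(M) = χ(M). -/
open Function

/-- A partial coloring `c` (with `none` meaning "uncolored") of the ground set of the
matroid `M`, using colors from `Fin n`, is proper when for each color `j` the elements
of the ground set colored `j` form an independent set of `M`. -/
def ProperColoring {α : Type*} {n : ℕ} (M : Matroid α) (c : α → Option (Fin n)) : Prop :=
  ∀ j : Fin n, M.Indep {x ∈ M.E | c x = some j}

/-- Coloring one more element strictly decreases the number of uncolored elements. -/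
theorem uncolored_update_lt {α β : Type*} [DecidableEq α] {E : Set α} (hE : E.Finite)
    {c : α → Option β} {e : α} (he : e ∈ E) (hce : c e = none) (j : β) :
    {x ∈ E | Function.update c e (some j) x = none}.ncard < {x ∈ E | c x = none}.ncard := by
  apply Set.ncard_lt_ncard
  · constructor
    · rintro x ⟨hxE, hxc⟩
      refine ⟨hxE, ?_⟩
      rcases eq_or_ne x e with rfl | hne
      · simp [Function.update_self] at hxc
      · rwa [Function.update_of_ne hne] at hxc
    · intro hsub
      have := hsub ⟨he, hce⟩
      simp [Function.update_self] at this
  · exact hE.subset (Set.sep_subset _ _)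

/-- Alice wins the indicated coloring game on the matroid `M` (with finite ground set) with
the color set `Fin n`, from the partial coloring `c`; defined by recursion on the number of
uncolored elements: either every element of the ground set is colored, or there is an
uncolored element `e` such that (i) at least one color can be assigned to `e` keeping the
coloring proper, and (ii) for every color whose assignment to `e` keeps the coloring proper,
Alice wins from the extended coloring. -/
def AliceWins {α : Type*} [DecidableEq α] {n : ℕ} (M : Matroid α) (hE : M.E.Finite)
    (c : α → Option (Fin n)) : Prop :=
  (∀ e ∈ M.E, c e ≠ none) ∨
    ∃ e, ∃ _ : e ∈ M.E, ∃ _ : c e = none,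
      (∃ j : Fin n, ProperColoring M (Function.update c e (some j))) ∧
      ∀ j : Fin n, ProperColoring M (Function.update c e (some j)) →
        AliceWins M hE (Function.update c e (some j))
termination_by {x ∈ M.E | c x = none}.ncard
decreasing_by all_goals (apply uncolored_update_lt <;> assumption)

/-- The indicated chromatic number `χᵢ(M)`: the least size `n` of a color set for which
Alice wins the indicated coloring game from the everywhere-uncolored coloring. -/
noncomputable def indicatedChromaticNumber {α : Type*} [DecidableEq α] (M : Matroid α)
    (hE : M.E.Finite) : ℕ :=
  sInf {n : ℕ | AliceWins (n := n) M hE (fun _ => none)}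

/-- The chromatic number `χ(M)`: the least `n` such that the ground set of `M` is the
union of `n` independent sets of `M`. -/
noncomputable def chromaticNumber {α : Type*} (M : Matroid α) : ℕ :=
  sInf {n : ℕ | ∃ V : Fin n → Set α, (∀ i, M.Indep (V i)) ∧ ⋃ i, V i = M.E}

/-!
Write `Cⱼ` for the color classes. Alice keeps the invariant `|X| + ∑ⱼ |Cⱼ| ≤ ∑ⱼ r(X ∪ Cⱼ)` for
every set `X` of uncolored elements, which a cover of `E` by `n` independent sets gives at the
start. Call `X` tight when equality holds; by submodularity of `r`, tight sets are closed under
intersection. Alice indicates an element `e` of an inclusion-minimal nonempty tight set `T` (any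
uncolored element if there is none); the invariant at `{e}` gives Bob a legal color. If a color `j`
broke the invariant, some nonempty tight `X ∌ e` would have `e` spanned by `X ∪ Cⱼ`. Minimality
makes `X` disjoint from `T`, and then submodularity of `r` at `X ∪ Cⱼ` and `T ∪ Cⱼ` is strict,
which is incompatible with tightness of `X` and `T` and the invariant at `X ∪ T`. Conversely, any
win of Alice ends in a proper coloring, i.e. a cover of `E` by `n` independent sets.
-/

open Set

theorem Fintype.sum_add_eq_sum_add_of_forall_ne {ι M : Type*} [Fintype ι] [DecidableEq ι]
    [AddCommMonoid M] {f g : ι → M} (j : ι) (h : ∀ i ≠ j, f i = g i) :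
    ∑ i, f i + g j = ∑ i, g i + f j := by
  rw [← Finset.add_sum_erase _ f (Finset.mem_univ j),
    ← Finset.add_sum_erase _ g (Finset.mem_univ j),
    Finset.sum_congr rfl fun i hi ↦ h i (Finset.ne_of_mem_erase hi)]
  ac_rfl

namespace Matroid

variable {α : Type*} {M : Matroid α} {I X Y A B T : Set α} {e : α}

/-- `toNat` sends an infinite rank to `0`, so the lemmas below assume `RankFinite`. -/
noncomputable def rk (M : Matroid α) (X : Set α) : ℕ := (M.eRk X).toNat

lemma Indep.rk_eq_ncard (hI : M.Indep I) : M.rk I = I.ncard := by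
  rw [rk, hI.eRk_eq_encard, ncard_def]

section RankFinite

variable [M.RankFinite]

lemma cast_rk (M : Matroid α) [M.RankFinite] (X : Set α) : (M.rk X : ℕ∞) = M.eRk X :=
  ENat.natCast_toNat (eRk_ne_top_iff.2 (M.isRkFinite_set X))

lemma rk_mono (hXY : X ⊆ Y) : M.rk X ≤ M.rk Y := by
  have h := M.eRk_mono hXY
  rwa [← cast_rk, ← cast_rk, Nat.cast_le] at h

lemma rk_union_add_rk_inter_le (M : Matroid α) [M.RankFinite] (X Y : Set α) :
    M.rk (X ∪ Y) + M.rk (X ∩ Y) ≤ M.rk X + M.rk Y := by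
  have h := M.eRk_inter_add_eRk_union_le X Y
  rw [← cast_rk, ← cast_rk, ← cast_rk, ← cast_rk, add_comm] at h
  exact_mod_cast h

lemma Indep.ncard_le_rk_of_subset (hI : M.Indep I) (hIX : I ⊆ X) : I.ncard ≤ M.rk X :=
  hI.rk_eq_ncard ▸ rk_mono hIX

lemma indep_of_ncard_le_rk (hX : X.Finite) (h : X.ncard ≤ M.rk X) : M.Indep X := by
  refine (indep_iff_eRk_eq_encard_of_finite hX).2 (le_antisymm (M.eRk_le_encard X) ?_)
  rw [← cast_rk, ← hX.cast_ncard_eq]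
  exact_mod_cast h

lemma rk_union_add_rk_inter_lt (heB : e ∈ B) (hA : M.rk (insert e A) ≤ M.rk A)
    (hAB : M.rk (A ∩ B) < M.rk (insert e (A ∩ B))) :
    M.rk (A ∪ B) + M.rk (A ∩ B) < M.rk A + M.rk B := by
  have h := M.rk_union_add_rk_inter_le (insert e A) B
  rw [insert_union, insert_eq_of_mem (mem_union_right A heB), insert_inter_of_mem heB] at h
  omega

end RankFinite

variable {n : ℕ} {c : α → Option (Fin n)} {i j : Fin n}

def colorClass (M : Matroid α) (c : α → Option (Fin n)) (j : Fin n) : Set α :=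
  {x ∈ M.E | c x = some j}

def uncolored (M : Matroid α) (c : α → Option (Fin n)) : Set α :=
  {x ∈ M.E | c x = none}

lemma colorClass_subset_ground (c : α → Option (Fin n)) (j : Fin n) : M.colorClass c j ⊆ M.E :=
  sep_subset _ _

lemma uncolored_subset_ground (c : α → Option (Fin n)) : M.uncolored c ⊆ M.E :=
  sep_subset _ _

lemma notMem_colorClass (hce : c e = none) (j : Fin n) : e ∉ M.colorClass c j := by
  simp [colorClass, hce]

lemma colorClass_none (j : Fin n) : M.colorClass (fun _ ↦ none) j = ∅ := by
  simp [colorClass]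

lemma properColoring_none : ProperColoring M (fun _ ↦ (none : Option (Fin n))) := fun j ↦ by
  change M.Indep (M.colorClass _ j)
  simp [colorClass_none]

lemma iUnion_colorClass (h : ∀ e ∈ M.E, c e ≠ none) : ⋃ j, M.colorClass c j = M.E := by
  refine (iUnion_subset (colorClass_subset_ground c)).antisymm fun x hx ↦ ?_
  obtain ⟨j, hj⟩ := Option.ne_none_iff_exists'.1 (h x hx)
  exact mem_iUnion.2 ⟨j, hx, hj⟩

noncomputable def numColored (M : Matroid α) (c : α → Option (Fin n)) : ℕ :=
  ∑ j, (M.colorClass c j).ncard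

noncomputable def rankSum (M : Matroid α) (c : α → Option (Fin n)) (X : Set α) : ℕ :=
  ∑ j, M.rk (X ∪ M.colorClass c j)

/-- Edmonds' matroid partition condition `|X| ≤ ∑ⱼ r_{M / Cⱼ}(X)` for uncolored `X`, with the
ranks in the contractions written out as `r(X ∪ Cⱼ) - |Cⱼ|`. -/
def PartitionCondition (M : Matroid α) (c : α → Option (Fin n)) : Prop :=
  ∀ X ⊆ M.uncolored c, X.ncard + M.numColored c ≤ M.rankSum c X

def IsTight (M : Matroid α) (c : α → Option (Fin n)) (X : Set α) : Prop :=
  X ⊆ M.uncolored c ∧ M.rankSum c X = X.ncard + M.numColored c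

lemma partitionCondition_none_of_cover [M.RankFinite] {V : Fin n → Set α}
    (hV : ∀ i, M.Indep (V i)) (hVE : ⋃ i, V i = M.E) :
    M.PartitionCondition (fun _ ↦ (none : Option (Fin n))) := by
  intro X hX
  simp only [numColored, rankSum, colorClass_none, ncard_empty, Finset.sum_const_zero,
    union_empty, add_zero]
  calc X.ncard = (⋃ j, X ∩ V j).ncard := by
        rw [← inter_iUnion, hVE, inter_eq_left.2 (hX.trans (uncolored_subset_ground _))]
    _ ≤ ∑ j, (X ∩ V j).ncard := ncard_iUnion_le_of_fintype _
    _ ≤ ∑ _j : Fin n, M.rk X := Finset.sum_le_sum fun j _ ↦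
        ((hV j).subset inter_subset_right).ncard_le_rk_of_subset inter_subset_left

lemma rankSum_union_add_inter_le [M.RankFinite] (c : α → Option (Fin n)) (X Y : Set α) :
    M.rankSum c (X ∪ Y) + M.rankSum c (X ∩ Y) ≤ M.rankSum c X + M.rankSum c Y := by
  simp only [rankSum, ← Finset.sum_add_distrib]
  refine Finset.sum_le_sum fun j _ ↦ ?_
  rw [union_union_distrib_right, inter_union_distrib_right]
  exact M.rk_union_add_rk_inter_le _ _

lemma rk_insert_colorClass [M.RankFinite] (hce : c e = none)
    (hj : M.Indep (insert e (M.colorClass c j))) :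
    M.rk (insert e (M.colorClass c j)) = M.rk (M.colorClass c j) + 1 := by
  rw [hj.rk_eq_ncard, (hj.subset (subset_insert _ _)).rk_eq_ncard,
    ncard_insert_of_notMem (notMem_colorClass hce j) (hj.finite.subset (subset_insert _ _))]

lemma rankSum_union_add_inter_lt [M.RankFinite] (hXT : Disjoint X T) (heT : e ∈ T)
    (hce : c e = none) (hj : M.Indep (insert e (M.colorClass c j)))
    (hcl : M.rk (insert e (X ∪ M.colorClass c j)) ≤ M.rk (X ∪ M.colorClass c j)) :
    M.rankSum c (X ∪ T) + M.rankSum c (X ∩ T) < M.rankSum c X + M.rankSum c T := by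
  simp only [rankSum, ← Finset.sum_add_distrib]
  refine Finset.sum_lt_sum (fun i _ ↦ ?_) ⟨j, Finset.mem_univ j, ?_⟩
  · rw [union_union_distrib_right, inter_union_distrib_right]
    exact M.rk_union_add_rk_inter_le _ _
  have hAB : (X ∪ M.colorClass c j) ∩ (T ∪ M.colorClass c j) = M.colorClass c j := by
    rw [← inter_union_distrib_right, hXT.inter_eq, empty_union]
  rw [union_union_distrib_right, inter_union_distrib_right]
  refine M.rk_union_add_rk_inter_lt (mem_union_left (M.colorClass c j) heT) hcl ?_
  rw [hAB, rk_insert_colorClass hce hj]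
  exact Nat.lt_succ_self _

section Update

variable [DecidableEq α]

lemma colorClass_update_self (he : e ∈ M.E) (j : Fin n) :
    M.colorClass (update c e (some j)) j = insert e (M.colorClass c j) := by
  ext x
  rcases eq_or_ne x e with rfl | hne <;> simp [colorClass, *]

lemma colorClass_update_of_ne (hce : c e = none) (hij : i ≠ j) :
    M.colorClass (update c e (some j)) i = M.colorClass c i := by
  ext x
  rcases eq_or_ne x e with rfl | hne <;> simp [colorClass, *, Ne.symm hij]

lemma uncolored_update (c : α → Option (Fin n)) (e : α) (j : Fin n) :
    M.uncolored (update c e (some j)) = M.uncolored c \ {e} := by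
  ext x
  rcases eq_or_ne x e with rfl | hne <;> simp [uncolored, *]

lemma properColoring_update_iff (hc : ProperColoring M c) (he : e ∈ M.E) (hce : c e = none) :
    ProperColoring M (update c e (some j)) ↔ M.Indep (insert e (M.colorClass c j)) := by
  refine ⟨fun h ↦ ?_, fun h i ↦ ?_⟩
  · have hj : M.Indep (M.colorClass (update c e (some j)) j) := h j
    rwa [colorClass_update_self he] at hj
  change M.Indep (M.colorClass _ i)
  rcases eq_or_ne i j with rfl | hij
  · rwa [colorClass_update_self he]
  · rw [colorClass_update_of_ne hce hij]
    exact hc i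

lemma numColored_update [M.Finite] (he : e ∈ M.E) (hce : c e = none) (j : Fin n) :
    M.numColored (update c e (some j)) = M.numColored c + 1 := by
  have h := Fintype.sum_add_eq_sum_add_of_forall_ne (f := fun i ↦ (M.colorClass c i).ncard)
    (g := fun i ↦ (M.colorClass (update c e (some j)) i).ncard) j
    fun i hij ↦ by rw [colorClass_update_of_ne hce hij]
  rw [colorClass_update_self he, ncard_insert_of_notMem (notMem_colorClass hce j)
    (M.ground_finite.subset (colorClass_subset_ground c j))] at h
  simp only [numColored]
  omega

lemma rankSum_update (he : e ∈ M.E) (hce : c e = none) (j : Fin n) (X : Set α) :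
    M.rankSum (update c e (some j)) X + M.rk (X ∪ M.colorClass c j) =
      M.rankSum c X + M.rk (insert e (X ∪ M.colorClass c j)) := by
  have h := Fintype.sum_add_eq_sum_add_of_forall_ne (f := fun i ↦ M.rk (X ∪ M.colorClass c i))
    (g := fun i ↦ M.rk (X ∪ M.colorClass (update c e (some j)) i)) j
    fun i hij ↦ by rw [colorClass_update_of_ne hce hij]
  rw [colorClass_update_self he, union_insert] at h
  simp only [rankSum]
  omega

end Update

section Finite

variable [M.Finite]

lemma PartitionCondition.rankSum_union_add_inter (h : M.PartitionCondition c)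
    (hX : M.IsTight c X) (hT : M.IsTight c T) :
    M.rankSum c (X ∪ T) + M.rankSum c (X ∩ T) = M.rankSum c X + M.rankSum c T := by
  have hXfin := M.ground_finite.subset (hX.1.trans (uncolored_subset_ground c))
  have hTfin := M.ground_finite.subset (hT.1.trans (uncolored_subset_ground c))
  have hunion := h (X ∪ T) (union_subset hX.1 hT.1)
  have hinter := h (X ∩ T) (inter_subset_left.trans hX.1)
  have hcard := ncard_union_add_ncard_inter X T hXfin hTfin
  have hsub := M.rankSum_union_add_inter_le c X T
  have := hX.2
  have := hT.2
  omega

lemma PartitionCondition.isTight_inter (h : M.PartitionCondition c)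
    (hX : M.IsTight c X) (hT : M.IsTight c T) : M.IsTight c (X ∩ T) := by
  have hXfin := M.ground_finite.subset (hX.1.trans (uncolored_subset_ground c))
  have hTfin := M.ground_finite.subset (hT.1.trans (uncolored_subset_ground c))
  refine ⟨inter_subset_left.trans hX.1, ?_⟩
  have hunion := h (X ∪ T) (union_subset hX.1 hT.1)
  have hinter := h (X ∩ T) (inter_subset_left.trans hX.1)
  have hcard := ncard_union_add_ncard_inter X T hXfin hTfin
  have hmod := h.rankSum_union_add_inter hX hT
  have := hX.2
  have := hT.2
  omega

lemma PartitionCondition.exists_indep_insert (h : M.PartitionCondition c)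
    (heU : e ∈ M.uncolored c) : ∃ j, M.Indep (insert e (M.colorClass c j)) := by
  have he := h {e} (singleton_subset_iff.2 heU)
  rw [ncard_singleton, rankSum, numColored, add_comm, Nat.add_one_le_iff] at he
  obtain ⟨j, -, hj⟩ := Finset.exists_lt_of_sum_lt he
  have hfin := (M.ground_finite.subset (colorClass_subset_ground c j)).insert e
  refine ⟨j, indep_of_ncard_le_rk hfin ((ncard_insert_le _ _).trans ?_)⟩
  rwa [← singleton_union]

variable [DecidableEq α]

lemma PartitionCondition.update_some (h : M.PartitionCondition c) (heU : e ∈ M.uncolored c)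
    (hj : M.Indep (insert e (M.colorClass c j)))
    (hspan : ∀ X, M.IsTight c X → X.Nonempty → e ∉ X →
      M.rk (insert e (X ∪ M.colorClass c j)) ≤ M.rk (X ∪ M.colorClass c j) → False) :
    M.PartitionCondition (update c e (some j)) := by
  obtain ⟨he, hce⟩ := heU
  intro X hX
  rw [uncolored_update] at hX
  have hXU : X ⊆ M.uncolored c := hX.trans sdiff_subset
  have heX : e ∉ X := fun heX ↦ (hX heX).2 rfl
  have hX' := h X hXU
  have hsum := rankSum_update he hce j X
  have hnum := numColored_update he hce j
  have hmono := M.rk_mono (subset_insert e (X ∪ M.colorClass c j))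
  by_contra! hlt
  rcases X.eq_empty_or_nonempty with rfl | hXne
  · rw [empty_union, rk_insert_colorClass hce hj] at hsum
    omega
  · exact hspan X ⟨hXU, by omega⟩ hXne heX (by omega)

lemma PartitionCondition.exists_forall_update (h : M.PartitionCondition c)
    (hU : (M.uncolored c).Nonempty) : ∃ e ∈ M.uncolored c, ∀ j : Fin n,
      M.Indep (insert e (M.colorClass c j)) → M.PartitionCondition (update c e (some j)) := by
  by_cases hT : ∃ T, M.IsTight c T ∧ T.Nonempty
  swap
  · obtain ⟨e, heU⟩ := hU
    exact ⟨e, heU, fun j hj ↦ h.update_some heU hj fun X hX hXne _ _ ↦ hT ⟨X, hX, hXne⟩⟩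
  have hfin : {T | M.IsTight c T ∧ T.Nonempty}.Finite :=
    (M.ground_finite.subset (uncolored_subset_ground c)).finite_subsets.subset fun T hT ↦ hT.1.1
  obtain ⟨T, ⟨hT, e, heT⟩, hmin⟩ := hfin.exists_minimal hT
  have heU := hT.1 heT
  refine ⟨e, heU, fun j hj ↦ h.update_some heU hj fun X hX _ heX hspan ↦ ?_⟩
  have hXT : Disjoint X T := by
    by_contra hXT
    have hTX := hmin ⟨h.isTight_inter hX hT, not_disjoint_iff_nonempty_inter.1 hXT⟩
      inter_subset_right
    exact heX (hTX heT).1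
  have hlt := rankSum_union_add_inter_lt hXT heT heU.2 hj hspan
  have heq := h.rankSum_union_add_inter hX hT
  omega

theorem aliceWins_of_partitionCondition (hc : ProperColoring M c)
    (h : M.PartitionCondition c) : AliceWins M M.ground_finite c := by
  induction hk : (M.uncolored c).ncard using Nat.strong_induction_on generalizing c with
  | _ k ih =>
  rw [AliceWins]
  rcases (M.uncolored c).eq_empty_or_nonempty with hU | hU
  · exact Or.inl fun e he hce ↦ (eq_empty_iff_forall_notMem.1 hU) e ⟨he, hce⟩
  obtain ⟨e, heU, hsafe⟩ := PartitionCondition.exists_forall_update h hU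
  obtain ⟨j, hj⟩ := PartitionCondition.exists_indep_insert h heU
  refine Or.inr ⟨e, heU.1, heU.2, ⟨j, (properColoring_update_iff hc heU.1 heU.2).2 hj⟩,
    fun i hi ↦ ih _ ?_ hi (hsafe i ((properColoring_update_iff hc heU.1 heU.2).1 hi)) rfl⟩
  rw [← hk]
  exact uncolored_update_lt M.ground_finite heU.1 heU.2 i

end Finite

theorem exists_indep_cover_of_aliceWins [DecidableEq α] (hE : M.E.Finite)
    (hc : ProperColoring M c) (hw : AliceWins M hE c) :
    ∃ V : Fin n → Set α, (∀ i, M.Indep (V i)) ∧ ⋃ i, V i = M.E := by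
  induction hk : (M.uncolored c).ncard using Nat.strong_induction_on generalizing c with
  | _ k ih =>
  rw [AliceWins] at hw
  rcases hw with hall | ⟨e, he, hce, ⟨j, hj⟩, hwin⟩
  · exact ⟨M.colorClass c, hc, iUnion_colorClass hall⟩
  refine ih _ ?_ hj (hwin j hj) rfl
  rw [← hk]
  exact uncolored_update_lt hE he hce j

end Matroid

theorem indicatedChromaticNumber_eq_chromaticNumber_general {α : Type*} [DecidableEq α]
    (M : Matroid α) (hE : M.E.Finite) :
    indicatedChromaticNumber M hE = chromaticNumber M := by
  have : M.Finite := ⟨hE⟩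
  rw [indicatedChromaticNumber, chromaticNumber]
  congr 1
  ext n
  exact ⟨M.exists_indep_cover_of_aliceWins hE Matroid.properColoring_none,
    fun ⟨_, hV, hVE⟩ ↦ Matroid.aliceWins_of_partitionCondition Matroid.properColoring_none
      (Matroid.partitionCondition_none_of_cover hV hVE)⟩

/-- For every loopless matroid `M` on a finite ground set, `χᵢ(M) = χ(M)`. -/
theorem indicatedChromaticNumber_eq_chromaticNumber {α : Type*} [DecidableEq α]
    (M : Matroid α) (hE : M.E.Finite) (hloopless : ∀ e ∈ M.E, M.Indep {e}) :
    indicatedChromaticNumber M hE = chromaticNumber M :=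
  indicatedChromaticNumber_eq_chromaticNumber_general M hE
end

section
/- Let M_1, …, M_k be matroids on the same finite ground set E, with rank functions r_1, …, r_k. Suppose there exist sets V_1, …, V_k ⊆ E such that V_i is independent in M_i for each i and V_1 ∪ … ∪ V_k = E, and suppose A ⊆ E satisfies r_1(A) + … + r_k(A) = |A|. Then there exist sets U_1, …, U_k ⊆ E \ A such that U_i is independent in the contracted matroid M_i/A for each i and U_1 ∪ … ∪ U_k = E \ A. -/
/-- The rank of a set `A` in the matroid `M`: the largest cardinality of an independent
subset of `A`. -/
noncomputable def rankFun {α : Type*} (M : Matroid α) (A : Set α) : ℕ :=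
  sSup {n : ℕ | ∃ I, I ⊆ A ∧ M.Indep I ∧ I.ncard = n}

/-- `I` is independent in the contraction `M/A` (the matroid on `M.E \ A` whose rank
function is `B ↦ rankFun M (A ∪ B) - rankFun M A`): that is, `I ⊆ M.E \ A` and the rank of
`I` in `M/A` equals its cardinality. -/
def IndepInContract {α : Type*} (M : Matroid α) (A I : Set α) : Prop :=
  I ⊆ M.E \ A ∧ rankFun M (A ∪ I) = rankFun M A + I.ncard
/-!
Take `U i = V i \ A`. Since `A` is covered by the independent sets `A ∩ V i`, we get
`|A| ≤ ∑ |A ∩ V i| ≤ ∑ rᵢ(A) = |A|`, so every `A ∩ V i` is a basis of `A` in `M i`.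
Then `V i = (A ∩ V i) ∪ U i` gives `rᵢ(A ∪ U i) ≥ |V i| = rᵢ(A) + |U i|`, and the
reverse inequality always holds.
-/

namespace Matroid

variable {α : Type*} {M : Matroid α} {I V X Y : Set α}

/-- When `X` has infinite rank, `rankFun M X` is the junk value `sSup ℕ = 0`, matching
`ENat.toNat ⊤ = 0`. -/
lemma rankFun_eq_toNat_eRk (M : Matroid α) (X : Set α) : rankFun M X = (M.eRk X).toNat := by
  obtain ⟨I, hI⟩ := M.exists_isBasis' X
  by_cases hX : M.IsRkFinite X
  · refine IsGreatest.csSup_eq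
      ⟨⟨I, hI.subset, hI.indep, by rw [Set.ncard_def, hI.encard_eq_eRk]⟩, ?_⟩
    rintro n ⟨J, hJX, hJ, rfl⟩
    exact ENat.toNat_le_toNat (hJ.encard_le_eRk_of_subset hJX) hX.eRk_lt_top.ne
  · have hIinf : I.Infinite := fun hIfin => hX (hI.isRkFinite_of_finite hIfin)
    have hall : {n : ℕ | ∃ J, J ⊆ X ∧ M.Indep J ∧ J.ncard = n} = Set.univ :=
      Set.eq_univ_of_forall fun n => by
        obtain ⟨J, hJI, hJn⟩ := hIinf.exists_subset_ncard_eq n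
        exact ⟨J, hJI.trans hI.subset, hI.indep.subset hJI, hJn.2⟩
    rw [rankFun, hall, Set.Infinite.Nat.sSup_eq_zero Set.infinite_univ, eRk_eq_top_iff.2 hX,
      ENat.toNat_top]

lemma IsRkFinite.cast_rankFun (hX : M.IsRkFinite X) : (rankFun M X : ℕ∞) = M.eRk X := by
  rw [rankFun_eq_toNat_eRk, ENat.natCast_toNat hX.eRk_lt_top.ne]

lemma Indep.ncard_le_rankFun (hI : M.Indep I) (hIX : I ⊆ X) (hX : M.IsRkFinite X) :
    I.ncard ≤ rankFun M X := by
  rw [rankFun_eq_toNat_eRk, Set.ncard_def]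
  exact ENat.toNat_le_toNat (hI.encard_le_eRk_of_subset hIX) hX.eRk_lt_top.ne

lemma rankFun_union_le_add_ncard (hX : M.IsRkFinite X) (hY : Y.Finite) :
    rankFun M (X ∪ Y) ≤ rankFun M X + Y.ncard := by
  have hXY : M.IsRkFinite (X ∪ Y) := hX.union (M.isRkFinite_of_finite hY)
  rw [← Nat.cast_le (α := ℕ∞), Nat.cast_add, hXY.cast_rankFun, hX.cast_rankFun,
    hY.cast_ncard_eq]
  exact M.eRk_union_le_eRk_add_encard X Y

lemma Indep.indepInContract_diff (hV : M.Indep V) (hVfin : V.Finite) (hX : M.IsRkFinite X)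
    (hXV : (X ∩ V).ncard = rankFun M X) : IndepInContract M X (V \ X) := by
  refine ⟨Set.sdiff_subset_sdiff_left hV.subset_ground,
    (rankFun_union_le_add_ncard hX hVfin.sdiff).antisymm ?_⟩
  have hV_le : V.ncard ≤ rankFun M (X ∪ V \ X) := by
    rw [Set.union_sdiff_self]
    exact hV.ncard_le_rankFun Set.subset_union_right (hX.union (M.isRkFinite_of_finite hVfin))
  rwa [← Set.ncard_inter_add_ncard_sdiff_eq_ncard V X hVfin, Set.inter_comm, hXV] at hV_le

end Matroid

/-- If `E` is covered by sets `V i` independent in the respective matroids `M i`, and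
`A ⊆ E` satisfies `∑ i, rᵢ(A) = |A|`, then `E \ A` is covered by sets `U i` independent in
the respective contractions `M i / A`. -/
theorem cover_contract_of_cover {α : Type*} {k : ℕ} (M : Fin k → Matroid α) (E : Set α)
    (hE : E.Finite) (hground : ∀ i, (M i).E = E)
    (V : Fin k → Set α) (hV : ∀ i, (M i).Indep (V i)) (hcover : ⋃ i, V i = E)
    (A : Set α) (hA : A ⊆ E) (heq : ∑ i, rankFun (M i) A = A.ncard) :
    ∃ U : Fin k → Set α, (∀ i, U i ⊆ E \ A ∧ IndepInContract (M i) A (U i)) ∧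
      ⋃ i, U i = E \ A := by
  have hAfin : A.Finite := hE.subset hA
  have hVE (i) : V i ⊆ E := hground i ▸ (hV i).subset_ground
  have hle (i) : (A ∩ V i).ncard ≤ rankFun (M i) A :=
    ((hV i).subset Set.inter_subset_right).ncard_le_rankFun Set.inter_subset_left
      ((M i).isRkFinite_of_finite hAfin)
  have hcovA : A.ncard ≤ ∑ i, (A ∩ V i).ncard := by
    calc A.ncard = (⋃ i, A ∩ V i).ncard := by
          rw [← Set.inter_iUnion, hcover, Set.inter_eq_left.2 hA]
      _ ≤ ∑ i, (A ∩ V i).ncard := Set.ncard_iUnion_le_of_fintype _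
  have htight (i) : (A ∩ V i).ncard = rankFun (M i) A :=
    (Finset.sum_eq_sum_iff_of_le fun i _ => hle i).1
      ((Finset.sum_le_sum fun i _ => hle i).antisymm (heq ▸ hcovA)) i (Finset.mem_univ i)
  refine ⟨fun i => V i \ A, fun i => ⟨Set.sdiff_subset_sdiff_left (hVE i), ?_⟩, ?_⟩
  · exact (hV i).indepInContract_diff (hE.subset (hVE i)) ((M i).isRkFinite_of_finite hAfin)
      (htight i)
  · rw [← Set.iUnion_sdiff, hcover]
end

section
/- Let M_1, …, M_k be matroids on the same finite ground set E with rank functions r_1, …, r_k, where |E| > 1. Suppose that r_1(E) + … + r_k(E) ≥ |E| and that r_1(A) + … + r_k(A) > |A| for every nonempty proper subset A ⊊ E. Then for every element e ∈ E and every index j such that {e} is independent in M_j, the matroids M_i restricted to E \ {e} for i ≠ j together with the contraction M_j/{e} satisfy the rank condition: for every A ⊆ E \ {e}, the sum over i ≠ j of the rank of A in M_i restricted to E \ {e}, plus the rank of A in M_j/{e}, is at least |A|. -/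
/-! On a nonempty proper subset `A` of `E \ {e}` the strict rank inequality leaves one unit of
slack, which pays for the loss of at most `r_j({e}) ≤ 1` when `M_j` is contracted by `e`;
restricting the other matroids to `E \ {e}` does not change the rank of `A`. -/

section RankFun

variable {α : Type*} (M : Matroid α) {A B : Set α}

lemma rankFun_bddAbove (hA : A.Finite) :
    BddAbove {n : ℕ | ∃ I, I ⊆ A ∧ M.Indep I ∧ I.ncard = n} := by
  refine ⟨A.ncard, ?_⟩
  rintro n ⟨I, hIA, -, rfl⟩
  exact Set.ncard_le_ncard hIA hA

lemma rankFun_le_ncard (hA : A.Finite) : rankFun M A ≤ A.ncard :=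
  csSup_le ⟨0, ∅, Set.empty_subset _, M.empty_indep, Set.ncard_empty _⟩ <| by
    rintro n ⟨I, hIA, -, rfl⟩
    exact Set.ncard_le_ncard hIA hA

lemma rankFun_mono (hB : B.Finite) (hAB : A ⊆ B) : rankFun M A ≤ rankFun M B :=
  csSup_le_csSup (rankFun_bddAbove M hB)
    ⟨0, ∅, Set.empty_subset _, M.empty_indep, Set.ncard_empty _⟩ <| by
      rintro n ⟨I, hIA, hI, rfl⟩
      exact ⟨I, hIA.trans hAB, hI, rfl⟩

lemma rankFun_restrict {X : Set α} (hAX : A ⊆ X) : rankFun (M.restrict X) A = rankFun M A := by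
  unfold rankFun
  congr 1
  ext n
  constructor
  · rintro ⟨I, hIA, hI, rfl⟩
    exact ⟨I, hIA, (Matroid.restrict_indep_iff.mp hI).1, rfl⟩
  · rintro ⟨I, hIA, hI, rfl⟩
    exact ⟨I, hIA, Matroid.restrict_indep_iff.mpr ⟨hI, hIA.trans hAX⟩, rfl⟩

lemma rankFun_le_rankFun_contract_singleton_add_one (hA : A.Finite) (e : α) :
    rankFun M A ≤ rankFun M ({e} ∪ A) - rankFun M {e} + 1 := by
  have hmono : rankFun M A ≤ rankFun M ({e} ∪ A) :=
    rankFun_mono M (hA.insert e) Set.subset_union_right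
  have hsingle : rankFun M {e} ≤ 1 := by
    simpa using rankFun_le_ncard M (Set.finite_singleton e)
  omega

end RankFun

theorem rank_condition_after_first_move_general {α : Type*} {k : ℕ} (M : Fin k → Matroid α)
    (E : Set α)
    (hstrict : ∀ A, A ⊆ E → A.Nonempty → A ≠ E → A.ncard < ∑ i, rankFun (M i) A)
    (e : α) (he : e ∈ E) (j : Fin k) :
    ∀ A ⊆ E \ {e},
      A.ncard ≤ (∑ i ∈ Finset.univ.erase j, rankFun ((M i).restrict (E \ {e})) A) +
        (rankFun (M j) ({e} ∪ A) - rankFun (M j) {e}) := by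
  intro A hA
  obtain rfl | hAne := A.eq_empty_or_nonempty
  · simp
  by_cases hAfin : A.Finite
  swap
  · simp [Set.Infinite.ncard hAfin]
  have hAE : A ≠ E := fun hAE => (hA (hAE ▸ he)).2 rfl
  have hlt := hstrict A (hA.trans Set.sdiff_subset) hAne hAE
  rw [← Finset.sum_erase_add _ _ (Finset.mem_univ j)] at hlt
  rw [Finset.sum_congr rfl fun i _ => rankFun_restrict (M i) hA]
  have := rankFun_le_rankFun_contract_singleton_add_one (M j) hAfin e
  omega

/-- Suppose `|E| > 1`, `∑ i, rᵢ(E) ≥ |E|`, and `∑ i, rᵢ(A) > |A|` for every nonempty proper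
subset `A ⊊ E`. Then for every `e ∈ E` and every index `j` with `{e}` independent in `M j`,
the matroids `M i ↾ (E \ {e})` for `i ≠ j` together with the contraction `M j / {e}`
satisfy the rank condition: for every `A ⊆ E \ {e}`,
`∑_{i ≠ j} r_{Mᵢ ↾ (E \ {e})}(A) + (r_j({e} ∪ A) - r_j({e})) ≥ |A|`. -/
theorem rank_condition_after_first_move {α : Type*} {k : ℕ} (M : Fin k → Matroid α)
    (E : Set α) (hE : E.Finite) (hground : ∀ i, (M i).E = E) (hcard : 1 < E.ncard)
    (hrE : E.ncard ≤ ∑ i, rankFun (M i) E)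
    (hstrict : ∀ A, A ⊆ E → A.Nonempty → A ≠ E → A.ncard < ∑ i, rankFun (M i) A)
    (e : α) (he : e ∈ E) (j : Fin k) (hej : (M j).Indep {e}) :
    ∀ A ⊆ E \ {e},
      A.ncard ≤ (∑ i ∈ Finset.univ.erase j, rankFun ((M i).restrict (E \ {e})) A) +
        (rankFun (M j) ({e} ∪ A) - rankFun (M j) {e}) :=
  rank_condition_after_first_move_general M E hstrict e he j
end

section
/- Let M_1, …, M_k be matroids on the same finite ground set E, where |E| > 1. Suppose there exist sets V_1, …, V_k ⊆ E such that V_i is independent in M_i for each i and V_1 ∪ … ∪ V_k = E, and suppose that the rank functions satisfy r_1(A) + … + r_k(A) > |A| for every nonempty proper subset A ⊊ E. Then for every element e ∈ E and every index j such that {e} is independent in M_j, there exist sets W_1, …, W_k with W_1 ∪ … ∪ W_k = E \ {e}, such that W_i is independent in M_i for every i ≠ j, and W_j ∪ {e} is independent in M_j. -/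
section Rado

open Finset Function

variable {ι α : Type*} [DecidableEq ι]

def availRank [Fintype ι] (ρ : ι → Finset α → ℕ) (A : α → Finset ι) (T : Finset α) : ℕ :=
  ∑ i, ρ i (T.filter fun s => i ∈ A s)

def RadoCondition [Fintype ι] (ρ : ι → Finset α → ℕ) (A : α → Finset ι) (S : Finset α) : Prop :=
  ∀ T ⊆ S, T.card ≤ availRank ρ A T

lemma availRank_update_of_notMem [Fintype ι] [DecidableEq α] (ρ : ι → Finset α → ℕ)
    (A : α → Finset ι) {s₀ : α} {T : Finset α} (X : Finset ι) (h : s₀ ∉ T) :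
    availRank ρ (update A s₀ X) T = availRank ρ A T := by
  refine sum_congr rfl fun i _ => congrArg (ρ i) (filter_congr fun s hs => ?_)
  rw [update_of_ne (ne_of_mem_of_not_mem hs h)]

lemma filter_union_filter_update_erase [DecidableEq α] (A : α → Finset ι) {s₀ : α}
    {T₁ T₂ : Finset α} {i₁ i₂ : ι} (h₁ : s₀ ∈ T₁) (h₂ : s₀ ∈ T₂) (hne : i₁ ≠ i₂) (i : ι) :
    T₁.filter (fun s => i ∈ update A s₀ ((A s₀).erase i₁) s) ∪
        T₂.filter (fun s => i ∈ update A s₀ ((A s₀).erase i₂) s) =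
      (T₁ ∪ T₂).filter fun s => i ∈ A s := by
  ext s
  rcases eq_or_ne s s₀ with rfl | hs
  · simp only [mem_union, mem_filter, update_self, mem_erase]
    by_cases hi : i = i₁ <;> grind
  · simp only [mem_union, mem_filter, update_of_ne hs]
    tauto

lemma filter_erase_inter_subset_inter_filter_update [DecidableEq α] (A : α → Finset ι) (s₀ : α)
    (T₁ T₂ : Finset α) (X₁ X₂ : Finset ι) (i : ι) :
    ((T₁ ∩ T₂).erase s₀).filter (fun s => i ∈ A s) ⊆
      T₁.filter (fun s => i ∈ update A s₀ X₁ s) ∩ T₂.filter (fun s => i ∈ update A s₀ X₂ s) := by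
  intro s hs
  simp only [mem_filter, mem_erase, mem_inter] at hs
  obtain ⟨⟨hs₀, hs₁, hs₂⟩, hi⟩ := hs
  simp only [mem_inter, mem_filter, update_of_ne hs₀]
  exact ⟨⟨hs₁, hi⟩, hs₂, hi⟩

lemma availRank_union_add_availRank_erase_inter_le [Fintype ι] [DecidableEq α]
    {ρ : ι → Finset α → ℕ}
    (hmono : ∀ i, Monotone (ρ i)) (hsub : ∀ i B C, ρ i (B ∪ C) + ρ i (B ∩ C) ≤ ρ i B + ρ i C)
    (A : α → Finset ι) {s₀ : α} {T₁ T₂ : Finset α} {i₁ i₂ : ι}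
    (h₁ : s₀ ∈ T₁) (h₂ : s₀ ∈ T₂) (hne : i₁ ≠ i₂) :
    availRank ρ A (T₁ ∪ T₂) + availRank ρ A ((T₁ ∩ T₂).erase s₀) ≤
      availRank ρ (update A s₀ ((A s₀).erase i₁)) T₁ +
        availRank ρ (update A s₀ ((A s₀).erase i₂)) T₂ := by
  simp only [availRank, ← sum_add_distrib]
  refine sum_le_sum fun i _ => ?_
  rw [← filter_union_filter_update_erase A h₁ h₂ hne i]
  exact (Nat.add_le_add_left (hmono i
    (filter_erase_inter_subset_inter_filter_update A s₀ T₁ T₂ _ _ i)) _).trans (hsub i _ _)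

lemma radoCondition_update_erase_or [Fintype ι] [DecidableEq α] {ρ : ι → Finset α → ℕ}
    (hmono : ∀ i, Monotone (ρ i)) (hsub : ∀ i B C, ρ i (B ∪ C) + ρ i (B ∩ C) ≤ ρ i B + ρ i C)
    {A : α → Finset ι} {S : Finset α} (hA : RadoCondition ρ A S) {s₀ : α} {i₁ i₂ : ι}
    (hne : i₁ ≠ i₂) :
    RadoCondition ρ (update A s₀ ((A s₀).erase i₁)) S ∨
      RadoCondition ρ (update A s₀ ((A s₀).erase i₂)) S := by
  by_contra h
  simp only [RadoCondition, not_or, not_forall, not_le] at h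
  obtain ⟨⟨T₁, hT₁S, hT₁⟩, T₂, hT₂S, hT₂⟩ := h
  have mem_of_lt : ∀ {X T}, T ⊆ S → availRank ρ (update A s₀ X) T < T.card → s₀ ∈ T :=
    fun hTS hT => by_contra fun hs => (hT.trans_le (hA _ hTS)).ne
      (availRank_update_of_notMem ρ A _ hs)
  have h₁ := mem_of_lt hT₁S hT₁
  have h₂ := mem_of_lt hT₂S hT₂
  have hunion := hA _ (union_subset hT₁S hT₂S)
  have hinter := hA ((T₁ ∩ T₂).erase s₀) ((erase_subset _ _).trans (inter_subset_left.trans hT₁S))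
  have hcard := card_union_add_card_inter T₁ T₂
  have herase := card_erase_add_one (mem_inter.2 ⟨h₁, h₂⟩)
  have := availRank_union_add_availRank_erase_inter_le hmono hsub A h₁ h₂ hne
  omega

lemma exists_cover_of_radoCondition_of_card_le_one [Fintype ι] {ρ : ι → Finset α → ℕ}
    (hzero : ∀ i, ρ i ∅ = 0) {A : α → Finset ι} {S : Finset α} (hA : RadoCondition ρ A S)
    (hA₁ : ∀ s ∈ S, (A s).card ≤ 1) :
    ∃ W : ι → Finset α, (∀ s ∈ S, ∃ i ∈ A s, s ∈ W i) ∧ ∀ i, W i ⊆ S ∧ (W i).card ≤ ρ i (W i) := by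
  refine ⟨fun i => S.filter fun s => A s = {i}, fun s hs => ?_, fun i => ⟨filter_subset _ _, ?_⟩⟩
  · obtain ⟨i, hi⟩ : (A s).Nonempty := by
      by_contra! hempty
      have := hA {s} (singleton_subset_iff.2 hs)
      simp [availRank, filter_singleton, hempty, hzero] at this
    obtain ⟨a, ha⟩ := card_eq_one.1 (le_antisymm (hA₁ s hs) (card_pos.2 ⟨i, hi⟩))
    exact ⟨a, by simp [ha], mem_filter.2 ⟨hs, ha⟩⟩
  · set W := S.filter fun s => A s = {i}
    have hfilter : ∀ i', W.filter (fun s => i' ∈ A s) = if i' = i then W else ∅ := by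
      intro i'
      ext s
      by_cases h : i' = i <;> simp_all [W]
    calc W.card ≤ availRank ρ A W := hA W (filter_subset _ _)
      _ = ρ i W := by simp [availRank, hfilter, apply_ite, hzero]

lemma sum_card_update_erase_lt [DecidableEq α] (A : α → Finset ι) {S : Finset α} {s₀ : α}
    {i : ι} (hs₀ : s₀ ∈ S) (hi : i ∈ A s₀) :
    ∑ s ∈ S, (update A s₀ ((A s₀).erase i) s).card < ∑ s ∈ S, (A s).card := by
  refine sum_lt_sum (fun s _ => card_le_card ?_) ⟨s₀, hs₀, ?_⟩
  · rcases eq_or_ne s s₀ with rfl | hs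
    · simpa using erase_subset _ _
    · rw [update_of_ne hs]
  · simpa using card_erase_lt_of_mem hi

lemma update_erase_subset [DecidableEq α] (A : α → Finset ι) (s₀ : α) (i : ι) (s : α) :
    update A s₀ ((A s₀).erase i) s ⊆ A s := by
  rcases eq_or_ne s s₀ with rfl | hs
  · simpa using erase_subset _ _
  · rw [update_of_ne hs]

theorem exists_cover_of_radoCondition [Fintype ι] [DecidableEq α] {ρ : ι → Finset α → ℕ}
    (hmono : ∀ i, Monotone (ρ i)) (hsub : ∀ i B C, ρ i (B ∪ C) + ρ i (B ∩ C) ≤ ρ i B + ρ i C)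
    (hzero : ∀ i, ρ i ∅ = 0) {A : α → Finset ι} {S : Finset α} (hA : RadoCondition ρ A S) :
    ∃ W : ι → Finset α, (∀ s ∈ S, ∃ i ∈ A s, s ∈ W i) ∧ ∀ i, W i ⊆ S ∧ (W i).card ≤ ρ i (W i) := by
  by_cases hA₁ : ∀ s ∈ S, (A s).card ≤ 1
  · exact exists_cover_of_radoCondition_of_card_le_one hzero hA hA₁
  obtain ⟨s₀, hs₀, hcard⟩ : ∃ s ∈ S, 1 < (A s).card := by simpa using hA₁
  obtain ⟨i₁, hi₁, i₂, hi₂, hne⟩ := one_lt_card.1 hcard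
  have shrink : ∀ i ∈ A s₀, RadoCondition ρ (update A s₀ ((A s₀).erase i)) S →
      ∃ W : ι → Finset α, (∀ s ∈ S, ∃ i ∈ A s, s ∈ W i) ∧
        ∀ i, W i ⊆ S ∧ (W i).card ≤ ρ i (W i) := fun i hi h' => by
    obtain ⟨W, hcover, hW⟩ := exists_cover_of_radoCondition hmono hsub hzero h'
    exact ⟨W, fun s hs => (hcover s hs).imp fun _ h => ⟨update_erase_subset A s₀ i s h.1, h.2⟩, hW⟩
  exact (radoCondition_update_erase_or hmono hsub hA hne).elim (shrink i₁ hi₁) (shrink i₂ hi₂)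
termination_by ∑ s ∈ S, (A s).card
decreasing_by exact sum_card_update_erase_lt A hs₀ hi

end Rado

namespace Matroid

open Set Function

variable {α : Type*} {M : Matroid α}

lemma natCast_rankFun (M : Matroid α) {A : Set α} (hA : A.Finite) :
    (rankFun M A : ℕ∞) = M.eRk A := by
  obtain ⟨I, hI⟩ := M.exists_isBasis' A
  have hIfin : I.Finite := hA.subset hI.subset
  have hmax : IsGreatest {n : ℕ | ∃ J, J ⊆ A ∧ M.Indep J ∧ J.ncard = n} I.ncard := by
    refine ⟨⟨I, hI.subset, hI.indep, rfl⟩, ?_⟩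
    rintro _ ⟨J, hJA, hJ, rfl⟩
    have hle : J.encard ≤ I.encard := hI.eRk_eq_encard ▸ hJ.encard_le_eRk_of_subset hJA
    rw [ncard_def, ncard_def]
    exact ENat.toNat_le_toNat hle hIfin.encard_lt_top.ne
  rw [rankFun, hmax.csSup_eq, hIfin.cast_ncard_eq, hI.eRk_eq_encard]

lemma IsNonloop.eRk_le_eRk_contract_add_one {e : α} (he : M.IsNonloop e) (X : Set α) :
    M.eRk X ≤ (M ／ {e}).eRk X + 1 := by
  obtain ⟨I, hI⟩ := M.exists_isBasis' X
  obtain ⟨J, hJ, heJ⟩ :=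
    he.indep.subset_isBasis'_of_subset (singleton_subset_iff.2 (mem_insert e I))
  have hJX : J \ {e} ⊆ X :=
    sdiff_singleton_subset_iff.2 (hJ.subset.trans (insert_subset_insert hI.subset))
  calc M.eRk X = I.encard := hI.eRk_eq_encard
    _ ≤ J.encard := hJ.eRk_eq_encard ▸ hI.indep.encard_le_eRk_of_subset (subset_insert e I)
    _ = (J \ {e}).encard + 1 := (encard_sdiff_singleton_add_one (heJ rfl)).symm
    _ ≤ (M ／ {e}).eRk X + 1 := by
      gcongr
      exact (hJ.indep.diff_indep_contract_of_subset heJ).encard_le_eRk_of_subset hJX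

lemma sum_eRk_le_sum_eRk_update_contract_add_one {ι : Type*} [Fintype ι] [DecidableEq ι]
    (M : ι → Matroid α) {j : ι} {e : α} (he : (M j).IsNonloop e) (X : Set α) :
    ∑ i, (M i).eRk X ≤ ∑ i, (update M j (M j ／ {e}) i).eRk X + 1 := by
  have hrest : ∑ i ∈ Finset.univ.erase j, (update M j (M j ／ {e}) i).eRk X =
      ∑ i ∈ Finset.univ.erase j, (M i).eRk X :=
    Finset.sum_congr rfl fun i hi => by rw [update_of_ne (Finset.ne_of_mem_erase hi)]
  rw [← Finset.add_sum_erase _ _ (Finset.mem_univ j),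
    ← Finset.add_sum_erase _ _ (Finset.mem_univ j), update_self, hrest, add_right_comm]
  gcongr
  exact he.eRk_le_eRk_contract_add_one X

theorem exists_iUnion_eq_indep_of_encard_le_sum_eRk {ι : Type*} [Fintype ι]
    (N : ι → Matroid α) {S : Set α} (hS : S.Finite)
    (h : ∀ T ⊆ S, T.encard ≤ ∑ i, (N i).eRk T) :
    ∃ W : ι → Set α, ⋃ i, W i = S ∧ ∀ i, (N i).Indep (W i) := by
  classical
  obtain ⟨ρ, hρ⟩ : ∃ ρ : ι → Finset α → ℕ, ∀ i T, (ρ i T : ℕ∞) = (N i).eRk T :=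
    ⟨fun i T => ((N i).eRk T).toNat, fun i T =>
      ENat.natCast_toNat ((N i).isRkFinite_of_finite T.finite_toSet).eRk_lt_top.ne⟩
  have hmono : ∀ i, Monotone (ρ i) := fun i B C hBC => by
    rw [← Nat.cast_le (α := ℕ∞), hρ, hρ]
    exact (N i).eRk_mono (Finset.coe_subset.2 hBC)
  have hsub : ∀ i B C, ρ i (B ∪ C) + ρ i (B ∩ C) ≤ ρ i B + ρ i C := fun i B C => by
    rw [← Nat.cast_le (α := ℕ∞)]
    push_cast [hρ, Finset.coe_union, Finset.coe_inter]
    rw [add_comm]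
    exact (N i).eRk_inter_add_eRk_union_le B C
  have hzero : ∀ i, ρ i ∅ = 0 := fun i => by
    rw [← Nat.cast_inj (R := ℕ∞), hρ, Finset.coe_empty, eRk_empty, Nat.cast_zero]
  have hcond : RadoCondition ρ (fun _ => Finset.univ) hS.toFinset := fun T hT => by
    rw [← Nat.cast_le (α := ℕ∞), availRank]
    push_cast [Finset.mem_univ, Finset.filter_true, hρ, ← encard_coe_eq_coe_finsetCard]
    exact h T (by simpa using Finset.coe_subset.2 hT)
  obtain ⟨W, hcover, hW⟩ := exists_cover_of_radoCondition hmono hsub hzero hcond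
  refine ⟨fun i => W i, ?_, fun i => ?_⟩
  · ext x
    simp only [mem_iUnion, Finset.mem_coe]
    refine ⟨fun ⟨i, hx⟩ => hS.mem_toFinset.1 ((hW i).1 hx), fun hx => ?_⟩
    obtain ⟨i, -, hi⟩ := hcover x (hS.mem_toFinset.2 hx)
    exact ⟨i, hi⟩
  · refine (indep_iff_eRk_eq_encard_of_finite (W i).finite_toSet).2
      (le_antisymm ((N i).eRk_le_encard _) ?_)
    rw [encard_coe_eq_coe_finsetCard, ← hρ]
    exact_mod_cast (hW i).2

end Matroid

theorem cover_after_first_move_general {α : Type*} {k : ℕ} (M : Fin k → Matroid α) (E : Set α)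
    (hE : E.Finite)
    (hstrict : ∀ A, A ⊆ E → A.Nonempty → A ≠ E → A.ncard < ∑ i, rankFun (M i) A)
    (e : α) (he : e ∈ E) (j : Fin k) (hej : (M j).Indep {e}) :
    ∃ W : Fin k → Set α, ⋃ i, W i = E \ {e} ∧ (∀ i, i ≠ j → (M i).Indep (W i)) ∧
      (M j).Indep (W j ∪ {e}) := by
  have hnl : (M j).IsNonloop e := Matroid.indep_singleton.1 hej
  have hrank : ∀ T ⊆ E \ {e},
      T.encard ≤ ∑ i, (Function.update M j ((M j).contract {e}) i).eRk T := by
    intro T hT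
    obtain rfl | hTne := T.eq_empty_or_nonempty
    · simp
    have hTfin := hE.subset (hT.trans Set.sdiff_subset)
    have hlt : (T.ncard : ℕ∞) < ∑ i, (M i).eRk T := by
      have := hstrict T (hT.trans Set.sdiff_subset) hTne fun h => (hT (h ▸ he)).2 rfl
      rw [← Nat.cast_lt (α := ℕ∞)] at this
      push_cast [Matroid.natCast_rankFun _ hTfin] at this
      exact this
    rw [← hTfin.cast_ncard_eq, ← ENat.add_le_add_iff_right ENat.one_ne_top]
    exact (ENat.natCast_add_one_le_iff.2 hlt).trans
      (Matroid.sum_eRk_le_sum_eRk_update_contract_add_one M hnl T)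
  obtain ⟨W, hW, hind⟩ := Matroid.exists_iUnion_eq_indep_of_encard_le_sum_eRk _ hE.sdiff hrank
  refine ⟨W, hW, fun i hi => by simpa [hi] using hind i, ?_⟩
  rw [Set.union_singleton]
  exact (hnl.contractElem_indep_iff.1 (by simpa using hind j)).2

/-- Suppose `|E| > 1`, `E` is covered by sets `V i` independent in the respective matroids
`M i`, and `∑ i, rᵢ(A) > |A|` for every nonempty proper subset `A ⊊ E`. Then for every
`e ∈ E` and every index `j` with `{e}` independent in `M j`, there are sets `W i` with
`W 0 ∪ … ∪ W (k-1) = E \ {e}` such that `W i` is independent in `M i` for every `i ≠ j`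
and `W j ∪ {e}` is independent in `M j`. -/
theorem cover_after_first_move {α : Type*} {k : ℕ} (M : Fin k → Matroid α) (E : Set α)
    (hE : E.Finite) (hground : ∀ i, (M i).E = E) (hcard : 1 < E.ncard)
    (V : Fin k → Set α) (hV : ∀ i, (M i).Indep (V i)) (hcover : ⋃ i, V i = E)
    (hstrict : ∀ A, A ⊆ E → A.Nonempty → A ≠ E → A.ncard < ∑ i, rankFun (M i) A)
    (e : α) (he : e ∈ E) (j : Fin k) (hej : (M j).Indep {e}) :
    ∃ W : Fin k → Set α, ⋃ i, W i = E \ {e} ∧ (∀ i, i ≠ j → (M i).Indep (W i)) ∧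
      (M j).Indep (W j ∪ {e}) :=
  cover_after_first_move_general M E hE hstrict e he j hej
end
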